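/- arXiv:1212.0048 — 3 statements merged into one kernel-verified Lean document; each statement's English description precedes it below -/
import Mathlib

section
/- For every nonnegative integer U, W(pqU) = W(pqU+1) = W(pU) + W(qU) − W(U). -/
/-- A strictly chained `(p,q)`-ary partition of `U`: a finite strictly decreasing
list of positive integers of the form `p^a * q^b`, each part divisible by the next,
summing to `U`. -/
def IsSCPartition (p q U : ℕ) (l : List ℕ) : Prop :=
  (∀ x ∈ l, ∃ a b : ℕ, x = p ^ a * q ^ b) ∧
  List.Chain' (fun x y => y ∣ x ∧ y < x) l ∧
  l.sum = U

/-- The set of strictly chained `(p,q)`-ary partitions of `U`. -/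
def Omega (p q U : ℕ) : Set (List ℕ) := {l | IsSCPartition p q U l}

/-- The subset of `Omega p q U` of partitions with no part equal to `1`. -/
def OmegaStar (p q U : ℕ) : Set (List ℕ) := {l | IsSCPartition p q U l ∧ 1 ∉ l}

/-- `W p q U` is the number of strictly chained `(p,q)`-ary partitions of `U`. -/
noncomputable def W (p q U : ℕ) : ℕ := (Omega p q U).ncard

/-- `Wstar p q U` is the number of strictly chained `(p,q)`-ary partitions of `U`
with no part equal to `1`. -/
noncomputable def Wstar (p q U : ℕ) : ℕ := (OmegaStar p q U).ncard

/-!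
Removing a final part `1` gives `W (N + 1) = W* (N + 1) + W* N`, where `W*` counts the partitions
without a part `1`. In such a partition the smallest part divides all the others and, not being
`1`, is divisible by `p` or by `q`; so these partitions of `N` are those with all parts divisible
by `p` or all parts divisible by `q`, and there are none unless `p ∣ N` or `q ∣ N`. Dividing every
part by `d ∈ {p, q, pq}` identifies the partitions of `d * M` with all parts divisible by `d` with
the partitions of `M`, so inclusion–exclusion gives `W* (pqU) = W (qU) + W (pU) - W U`. Finally
`pqU ± 1` is divisible by neither `p` nor `q`, whence `W (pqU) = W* (pqU) = W (pqU + 1)`.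
-/

def OmegaDvd (p q d N : ℕ) : Set (List ℕ) := {l | l ∈ Omega p q N ∧ ∀ x ∈ l, d ∣ x}

variable {p q : ℕ}

theorem le_and_le_of_pow_mul_pow_dvd (hp : 1 < p) (hq : 1 < q) (hpq : p.Coprime q)
    {i j a b : ℕ} (h : p ^ i * q ^ j ∣ p ^ a * q ^ b) : i ≤ a ∧ j ≤ b := by
  constructor
  · refine (Nat.pow_dvd_pow_iff_le_right hp).mp ((hpq.pow i b).dvd_of_dvd_mul_right ?_)
    exact (dvd_mul_right _ _).trans h
  · refine (Nat.pow_dvd_pow_iff_le_right hq).mp ((hpq.symm.pow j a).dvd_of_dvd_mul_left ?_)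
    exact (dvd_mul_left _ _).trans h

theorem exists_pow_mul_pow_eq_mul_iff (hp : 1 < p) (hq : 1 < q) (hpq : p.Coprime q)
    (i j x : ℕ) :
    (∃ a b, p ^ i * q ^ j * x = p ^ a * q ^ b) ↔ ∃ a b, x = p ^ a * q ^ b := by
  constructor
  · rintro ⟨a, b, h⟩
    obtain ⟨hi, hj⟩ := le_and_le_of_pow_mul_pow_dvd hp hq hpq (h ▸ dvd_mul_right _ x)
    refine ⟨a - i, b - j, Nat.eq_of_mul_eq_mul_left (by positivity : 0 < p ^ i * q ^ j) ?_⟩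
    rw [h, ← Nat.add_sub_cancel' hi, ← Nat.add_sub_cancel' hj, Nat.add_sub_cancel_left,
      Nat.add_sub_cancel_left]
    ring
  · rintro ⟨a, b, rfl⟩
    exact ⟨i + a, j + b, by ring⟩

namespace IsSCPartition

variable {N : ℕ} {l : List ℕ}

theorem pairwise (h : IsSCPartition p q N l) : l.Pairwise (fun x y => y ∣ x ∧ y < x) :=
  have : Trans (fun x y : ℕ => y ∣ x ∧ y < x) (fun x y => y ∣ x ∧ y < x)
      (fun x y => y ∣ x ∧ y < x) := ⟨fun h₁ h₂ => ⟨h₂.1.trans h₁.1, h₂.2.trans h₁.2⟩⟩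
  List.isChain_iff_pairwise.mp h.2.1

theorem pos (hp : 0 < p) (hq : 0 < q) (h : IsSCPartition p q N l) : ∀ x ∈ l, 0 < x := by
  intro x hx
  obtain ⟨a, b, rfl⟩ := h.1 x hx
  positivity

theorem last_dvd_and_lt {m : ℕ} (h : IsSCPartition p q N (l ++ [m])) :
    ∀ x ∈ l, m ∣ x ∧ m < x :=
  fun x hx => (List.pairwise_append.mp h.pairwise).2.2 x hx m (List.mem_singleton_self m)

end IsSCPartition

theorem omega_finite (N : ℕ) : (Omega p q N).Finite := by
  refine Set.Finite.of_finite_image (f := List.toFinset) ?_ ?_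
  · refine (Finset.range (N + 1)).powerset.finite_toSet.subset ?_
    rintro _ ⟨l, hl, rfl⟩
    rw [Finset.mem_coe, Finset.mem_powerset]
    intro x hx
    rw [List.mem_toFinset] at hx
    rw [Finset.mem_range, Nat.lt_succ_iff, ← hl.2.2]
    exact List.le_sum_of_mem hx
  · intro l₁ h₁ l₂ h₂ he
    have s₁ : l₁.Pairwise (· > ·) := h₁.pairwise.imp And.right
    have s₂ : l₂.Pairwise (· > ·) := h₂.pairwise.imp And.right
    exact List.Perm.eq_of_pairwise' s₁ s₂
      (List.perm_of_nodup_nodup_toFinset_eq s₁.nodup s₂.nodup he)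

theorem isSCPartition_map_mul_iff (hp : 1 < p) (hq : 1 < q) (hpq : p.Coprime q)
    (i j M : ℕ) (l : List ℕ) :
    IsSCPartition p q (p ^ i * q ^ j * M) (l.map (p ^ i * q ^ j * ·)) ↔ IsSCPartition p q M l := by
  have hd : 0 < p ^ i * q ^ j := by positivity
  have hsum : (l.map (p ^ i * q ^ j * ·)).sum = p ^ i * q ^ j * l.sum := by
    simpa using List.sum_map_mul_left l (fun x => x) (p ^ i * q ^ j)
  unfold IsSCPartition
  rw [List.forall_mem_map, List.Chain', List.isChain_map, hsum, Nat.mul_left_cancel_iff hd]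
  simp only [exists_pow_mul_pow_eq_mul_iff hp hq hpq, Nat.mul_dvd_mul_iff_left hd,
    Nat.mul_lt_mul_left hd]
  rfl

theorem omegaDvd_eq_image (hp : 1 < p) (hq : 1 < q) (hpq : p.Coprime q) (i j M : ℕ) :
    OmegaDvd p q (p ^ i * q ^ j) (p ^ i * q ^ j * M) =
      List.map (p ^ i * q ^ j * ·) '' Omega p q M := by
  ext l
  constructor
  · rintro ⟨hl, hdvd⟩
    have hdiv : (l.map (· / (p ^ i * q ^ j))).map (p ^ i * q ^ j * ·) = l := by
      rw [List.map_map]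
      conv_rhs => rw [← List.map_id l]
      exact List.map_congr_left fun x hx => Nat.mul_div_cancel' (hdvd x hx)
    rw [← hdiv] at hl ⊢
    exact ⟨_, (isSCPartition_map_mul_iff hp hq hpq i j M _).mp hl, rfl⟩
  · rintro ⟨l, hl, rfl⟩
    exact ⟨(isSCPartition_map_mul_iff hp hq hpq i j M l).mpr hl,
      List.forall_mem_map.mpr fun x _ => dvd_mul_right _ x⟩

theorem ncard_omegaDvd (hp : 1 < p) (hq : 1 < q) (hpq : p.Coprime q) {d : ℕ}
    (hd : ∃ i j, d = p ^ i * q ^ j) (M : ℕ) : (OmegaDvd p q d (d * M)).ncard = W p q M := by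
  obtain ⟨i, j, rfl⟩ := hd
  have hd : p ^ i * q ^ j ≠ 0 := by positivity
  rw [omegaDvd_eq_image hp hq hpq,
    Set.ncard_image_of_injective _ (List.map_injective_iff.mpr (mul_right_injective₀ hd))]
  rfl

theorem omegaStar_eq_union (hp : 1 < p) (hq : 1 < q) (N : ℕ) :
    OmegaStar p q N = OmegaDvd p q p N ∪ OmegaDvd p q q N := by
  ext l
  constructor
  · rintro ⟨hl, h1⟩
    rcases List.eq_nil_or_concat' l with rfl | ⟨l, m, rfl⟩
    · exact Or.inl ⟨hl, by simp⟩
    have hm : ∀ x ∈ l ++ [m], m ∣ x := by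
      simpa [or_imp, forall_and] using fun x hx => (hl.last_dvd_and_lt x hx).1
    obtain ⟨a, b, hab⟩ := hl.1 m (by simp)
    rcases Nat.eq_zero_or_pos a with rfl | ha
    · rcases Nat.eq_zero_or_pos b with rfl | hb
      · simp_all
      · have hqm : q ∣ m := hab ▸ dvd_mul_of_dvd_right (dvd_pow_self q hb.ne') _
        exact Or.inr ⟨hl, fun x hx => hqm.trans (hm x hx)⟩
    · have hpm : p ∣ m := hab ▸ dvd_mul_of_dvd_left (dvd_pow_self p ha.ne') _
      exact Or.inl ⟨hl, fun x hx => hpm.trans (hm x hx)⟩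
  · rintro (⟨hl, hdvd⟩ | ⟨hl, hdvd⟩) <;>
      exact ⟨hl, fun h1 => by have := Nat.le_of_dvd one_pos (hdvd 1 h1); omega⟩

theorem omegaDvd_inter_omegaDvd (hpq : p.Coprime q) (N : ℕ) :
    OmegaDvd p q p N ∩ OmegaDvd p q q N = OmegaDvd p q (p * q) N := by
  ext l
  constructor
  · rintro ⟨⟨hl, hdp⟩, -, hdq⟩
    exact ⟨hl, fun x hx => hpq.mul_dvd_of_dvd_of_dvd (hdp x hx) (hdq x hx)⟩
  · rintro ⟨hl, hdpq⟩
    exact ⟨⟨hl, fun x hx => (dvd_mul_right p q).trans (hdpq x hx)⟩,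
      ⟨hl, fun x hx => (dvd_mul_left q p).trans (hdpq x hx)⟩⟩

theorem isSCPartition_append_one_iff (hp : 0 < p) (hq : 0 < q) (N : ℕ) (l : List ℕ) :
    IsSCPartition p q (N + 1) (l ++ [1]) ↔ IsSCPartition p q N l ∧ 1 ∉ l := by
  constructor
  · intro h
    refine ⟨⟨fun x hx => h.1 x (List.mem_append_left _ hx),
      (List.isChain_append.mp h.2.1).1, by simpa using h.2.2⟩, fun h1 => ?_⟩
    exact lt_irrefl 1 (h.last_dvd_and_lt 1 h1).2
  · rintro ⟨⟨hparts, hchain, hsum⟩, h1⟩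
    refine ⟨?_, List.isChain_append.mpr ⟨hchain, List.isChain_singleton 1, ?_⟩, by simp [hsum]⟩
    · simp only [List.mem_append, List.mem_singleton]
      rintro x (hx | rfl)
      exacts [hparts x hx, ⟨0, 0, by simp⟩]
    · intro x hx y hy
      obtain rfl : 1 = y := by simpa using hy
      have hxl := List.mem_of_mem_getLast? hx
      have := IsSCPartition.pos hp hq ⟨hparts, hchain, hsum⟩ x hxl
      have : x ≠ 1 := fun hx1 => h1 (hx1 ▸ hxl)
      exact ⟨one_dvd x, by omega⟩

theorem omega_add_one (hp : 0 < p) (hq : 0 < q) (N : ℕ) :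
    Omega p q (N + 1) = OmegaStar p q (N + 1) ∪ (· ++ [1]) '' OmegaStar p q N := by
  ext l
  constructor
  · intro hl
    by_cases h1 : 1 ∈ l
    · right
      rcases List.eq_nil_or_concat' l with rfl | ⟨l, m, rfl⟩
      · simp at h1
      obtain rfl : m = 1 := by
        rcases List.mem_append.mp h1 with h1 | h1
        · have := hl.last_dvd_and_lt 1 h1
          have := Nat.dvd_one.mp this.1
          omega
        · exact (List.mem_singleton.mp h1).symm
      exact ⟨l, (isSCPartition_append_one_iff hp hq N l).mp hl, rfl⟩
    · exact Or.inl ⟨hl, h1⟩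
  · rintro (⟨hl, -⟩ | ⟨l, ⟨hl, h1⟩, rfl⟩)
    · exact hl
    · exact (isSCPartition_append_one_iff hp hq N l).mpr ⟨hl, h1⟩

theorem W_add_one (hp : 0 < p) (hq : 0 < q) (N : ℕ) :
    W p q (N + 1) = Wstar p q (N + 1) + Wstar p q N := by
  have hdisj : Disjoint (OmegaStar p q (N + 1)) ((· ++ [1]) '' OmegaStar p q N) := by
    rw [Set.disjoint_left]
    rintro _ ⟨_, h1⟩ ⟨l, _, rfl⟩
    exact h1 (List.mem_append_right l (List.mem_singleton_self 1))
  rw [W, omega_add_one hp hq N,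
    Set.ncard_union_eq hdisj ((omega_finite _).subset fun _ h => h.1)
      (((omega_finite _).subset fun _ h => h.1).image _),
    Set.ncard_image_of_injective _ (List.append_left_injective [1])]
  rfl

theorem Wstar_zero : Wstar p q 0 = W p q 0 := by
  unfold Wstar W OmegaStar Omega
  congr 1
  ext l
  refine ⟨And.left, fun hl => ⟨hl, fun h1 => ?_⟩⟩
  have := List.le_sum_of_mem h1
  have := hl.2.2
  omega

theorem omegaDvd_eq_empty {d N : ℕ} (h : ¬ d ∣ N) : OmegaDvd p q d N = ∅ :=
  Set.eq_empty_of_forall_notMem fun _ ⟨hl, hdvd⟩ => h (hl.2.2 ▸ List.dvd_sum hdvd)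

theorem Wstar_eq_zero (hp : 1 < p) (hq : 1 < q) {N : ℕ} (hpN : ¬ p ∣ N) (hqN : ¬ q ∣ N) :
    Wstar p q N = 0 := by
  rw [Wstar, omegaStar_eq_union hp hq, omegaDvd_eq_empty hpN, omegaDvd_eq_empty hqN,
    Set.union_empty, Set.ncard_empty]

theorem not_dvd_add_one_of_dvd {d n : ℕ} (hd : 1 < d) (h : d ∣ n) : ¬ d ∣ n + 1 :=
  fun h' => hd.ne' (Nat.dvd_one.mp ((Nat.dvd_add_right h).mp h'))

theorem W_eq_Wstar_of_dvd (hp : 1 < p) (hq : 1 < q) {N : ℕ} (hpN : p ∣ N) (hqN : q ∣ N) :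
    W p q N = Wstar p q N := by
  rcases N with _ | N
  · exact Wstar_zero.symm
  · rw [W_add_one (by omega) (by omega),
      Wstar_eq_zero hp hq (fun h => not_dvd_add_one_of_dvd hp h hpN)
        (fun h => not_dvd_add_one_of_dvd hq h hqN), add_zero]

theorem W_add_one_eq_Wstar_of_dvd (hp : 1 < p) (hq : 1 < q) {N : ℕ} (hpN : p ∣ N)
    (hqN : q ∣ N) : W p q (N + 1) = Wstar p q N := by
  rw [W_add_one (by omega) (by omega),
    Wstar_eq_zero hp hq (not_dvd_add_one_of_dvd hp hpN) (not_dvd_add_one_of_dvd hq hqN), zero_add]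

theorem Wstar_mul_add_W (hp : 1 < p) (hq : 1 < q) (hpq : p.Coprime q) (U : ℕ) :
    Wstar p q (p * q * U) + W p q U = W p q (p * U) + W p q (q * U) := by
  have hfin (d : ℕ) : (OmegaDvd p q d (p * q * U)).Finite :=
    (omega_finite _).subset fun _ h => h.1
  have hP : (OmegaDvd p q p (p * q * U)).ncard = W p q (q * U) := by
    rw [mul_assoc]
    exact ncard_omegaDvd hp hq hpq ⟨1, 0, by ring⟩ _
  have hQ : (OmegaDvd p q q (p * q * U)).ncard = W p q (p * U) := by
    rw [mul_comm p q, mul_assoc]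
    exact ncard_omegaDvd hp hq hpq ⟨0, 1, by ring⟩ _
  have hPQ : (OmegaDvd p q (p * q) (p * q * U)).ncard = W p q U :=
    ncard_omegaDvd hp hq hpq ⟨1, 1, by ring⟩ _
  have := Set.ncard_union_add_ncard_inter _ _ (hfin p) (hfin q)
  rw [omegaDvd_inter_omegaDvd hpq, hP, hQ, hPQ, ← omegaStar_eq_union hp hq] at this
  rw [Wstar, this, add_comm]

theorem W_pqU (p q : ℕ) (hp : 1 < p) (hq : 1 < q) (hpq : Nat.Coprime p q) (U : ℕ) :
    W p q (p * q * U) = W p q (p * q * U + 1) ∧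
    (W p q (p * q * U) : ℤ) = (W p q (p * U) : ℤ) + (W p q (q * U) : ℤ) - (W p q U : ℤ) := by
  have hpN : p ∣ p * q * U := Dvd.intro (q * U) (mul_assoc p q U).symm
  have hqN : q ∣ p * q * U := Dvd.intro (p * U) (by ring)
  have hstar := W_eq_Wstar_of_dvd hp hq hpN hqN
  have hstar_succ := W_add_one_eq_Wstar_of_dvd hp hq hpN hqN
  have hcount := Wstar_mul_add_W hp hq hpq U
  omega
end

section
/- Assume p = 2. Then for every integer U ≥ 1, W(qU) = W(U) + W(qU−1). -/
/-!
In a strictly chained `(2,q)`-ary partition of `N` the parts not divisible by `q` are powers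
of two, and since each part divides the previous one they form a final segment: the binary
expansion of its sum `s`. If `q ∣ N`, the partitions with `s = 0` are the images of those of
`N / q` under multiplication by `q`. Otherwise `q ∣ s`, and replacing the tail by the binary
expansion of `s - 1` is a bijection onto the partitions of `N - 1`: its inverse replaces the
tail sum `s'` by `s' + 1`, and the chain condition survives in both directions because
`log₂ (s - 1) ≤ log₂ s`, while `log₂ (s' + 1) = log₂ s'` as `s' + 1` is a multiple of the
odd number `q`, hence not a power of two.
-/

open List

def binaryParts (n : ℕ) : List ℕ := (n.bitIndices.map (2 ^ ·)).reverse

lemma mem_binaryParts {n y : ℕ} : y ∈ binaryParts n ↔ ∃ i, n.testBit i ∧ 2 ^ i = y := by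
  simp [binaryParts]

lemma sum_binaryParts (n : ℕ) : (binaryParts n).sum = n := by
  simp [binaryParts]

lemma pairwise_binaryParts (n : ℕ) :
    (binaryParts n).Pairwise (fun x y => y ∣ x ∧ y < x) := by
  rw [binaryParts, pairwise_reverse, pairwise_map]
  exact Nat.bitIndices_sorted.pairwise.imp fun hij =>
    ⟨pow_dvd_pow 2 hij.le, Nat.pow_lt_pow_right one_lt_two hij⟩

lemma binaryParts_sum_eq_self {l : List ℕ} (hpow : ∀ x ∈ l, ∃ k, x = 2 ^ k)
    (hl : l.Pairwise (· > ·)) : binaryParts l.sum = l := by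
  set L := (l.map (Nat.log 2)).reverse
  have hlL : (L.map (2 ^ ·)).reverse = l := by
    rw [map_reverse, reverse_reverse, map_map]
    conv_rhs => rw [← map_id l]
    refine map_congr_left fun x hx => ?_
    obtain ⟨k, rfl⟩ := hpow x hx
    simp [Nat.log_pow]
  have hL : L.SortedLT := by
    rw [sortedLT_iff_pairwise, pairwise_reverse, pairwise_map]
    refine hl.imp_of_mem fun hx hy hxy => ?_
    obtain ⟨a, rfl⟩ := hpow _ hx
    obtain ⟨b, rfl⟩ := hpow _ hy
    simpa [Nat.log_pow, Nat.pow_lt_pow_iff_right] using hxy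
  rw [← hlL, sum_reverse, binaryParts, Nat.bitIndices_sum_map_two_pow hL]

lemma two_pow_log_mem_binaryParts {n : ℕ} (hn : n ≠ 0) : 2 ^ Nat.log 2 n ∈ binaryParts n :=
  mem_binaryParts.2 ⟨_, Nat.log2_eq_log_two ▸ Nat.testBit_log2 hn, rfl⟩

lemma dvd_two_pow_log_of_mem_binaryParts {n y : ℕ} (hy : y ∈ binaryParts n) :
    y ∣ 2 ^ Nat.log 2 n := by
  obtain ⟨i, hi, rfl⟩ := mem_binaryParts.1 hy
  exact pow_dvd_pow 2 (Nat.le_log_of_pow_le one_lt_two (Nat.ge_two_pow_of_testBit hi))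

lemma forall_binaryParts_of_log_le {s n x : ℕ} (hs : s ≠ 0)
    (hlog : Nat.log 2 n ≤ Nat.log 2 s) (h : ∀ y ∈ binaryParts s, y ∣ x ∧ y < x) :
    ∀ y ∈ binaryParts n, y ∣ x ∧ y < x := by
  obtain ⟨hdvd, hlt⟩ := h _ (two_pow_log_mem_binaryParts hs)
  intro y hy
  have hy' : y ∣ 2 ^ Nat.log 2 s :=
    (dvd_two_pow_log_of_mem_binaryParts hy).trans (pow_dvd_pow 2 hlog)
  exact ⟨hy'.trans hdvd, (Nat.le_of_dvd (by positivity) hy').trans_lt hlt⟩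

lemma isSCPartition_iff {p q U : ℕ} {l : List ℕ} :
    IsSCPartition p q U l ↔ (∀ x ∈ l, ∃ a b, x = p ^ a * q ^ b) ∧
      l.Pairwise (fun x y => y ∣ x ∧ y < x) ∧ l.sum = U := by
  have : Trans (fun x y : ℕ => y ∣ x ∧ y < x) (fun x y => y ∣ x ∧ y < x)
      (fun x y => y ∣ x ∧ y < x) :=
    ⟨fun h₁ h₂ => ⟨h₂.1.trans h₁.1, h₂.2.trans h₁.2⟩⟩
  rw [IsSCPartition, Chain', isChain_iff_pairwise]

lemma finite_omega (p q N : ℕ) : (Omega p q N).Finite := by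
  refine Set.Finite.of_finite_image (f := toFinset)
    ((Finset.range (N + 1)).powerset.finite_toSet.subset ?_) fun l₁ h₁ l₂ h₂ h => ?_
  · rintro _ ⟨l, hl, rfl⟩
    simp only [Finset.coe_powerset, Set.mem_preimage, Set.mem_powerset_iff, Finset.coe_subset]
    intro x hx
    rw [mem_toFinset] at hx
    have := (isSCPartition_iff.1 hl).2.2 ▸ single_le_sum (fun _ _ => Nat.zero_le _) x hx
    simpa [Nat.lt_succ_iff] using this
  · exact ((isSCPartition_iff.1 h₁).2.1.imp And.right).eq_of_mem_iff
      ((isSCPartition_iff.1 h₂).2.1.imp And.right) (by simpa [Finset.ext_iff] using h)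

lemma exists_mul_eq_pow_mul_pow_iff {p q : ℕ} (hq : 1 < q) (hpq : Nat.Coprime p q)
    {z : ℕ} : (∃ a b, q * z = p ^ a * q ^ b) ↔ ∃ a b, z = p ^ a * q ^ b := by
  constructor
  · rintro ⟨a, _ | b, h⟩
    · exact absurd (((hpq.pow_left a).symm).eq_one_of_dvd ⟨z, by simpa using h.symm⟩) hq.ne'
    · exact ⟨a, b, Nat.eq_of_mul_eq_mul_left (by omega : 0 < q) (by rw [h]; ring)⟩
  · rintro ⟨a, b, rfl⟩
    exact ⟨a, b + 1, by ring⟩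

lemma map_mul_mem_omega_iff {p q U : ℕ} (hq : 1 < q) (hpq : Nat.Coprime p q) {l : List ℕ} :
    l.map (q * ·) ∈ Omega p q (q * U) ↔ l ∈ Omega p q U := by
  have hq0 : 0 < q := by omega
  have hsum : (l.map (q * ·)).sum = q * l.sum := by simpa using sum_map_mul_left l id q
  simp only [Omega, Set.mem_ofPred_eq, isSCPartition_iff, forall_mem_map, pairwise_map,
    exists_mul_eq_pow_mul_pow_iff hq hpq, Nat.mul_dvd_mul_iff_left hq0,
    Nat.mul_lt_mul_left hq0, hsum, Nat.mul_left_cancel_iff hq0]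

lemma image_map_mul_omega {p q U : ℕ} (hq : 1 < q) (hpq : Nat.Coprime p q) :
    (fun l => l.map (q * ·)) '' Omega p q U =
      Omega p q (q * U) ∩ {l | ∀ x ∈ l, q ∣ x} := by
  ext l
  constructor
  · rintro ⟨m, hm, rfl⟩
    exact ⟨(map_mul_mem_omega_iff hq hpq).2 hm, by simp⟩
  · rintro ⟨hl, hdvd⟩
    have hl' : (l.map (· / q)).map (q * ·) = l := by
      rw [map_map]
      conv_rhs => rw [← map_id l]
      exact map_congr_left fun x hx => Nat.mul_div_cancel' (hdvd x hx)
    exact ⟨_, (map_mul_mem_omega_iff hq hpq).1 (hl'.symm ▸ hl), hl'⟩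

lemma ncard_omega_inter_forall_dvd {p q U : ℕ} (hq : 1 < q) (hpq : Nat.Coprime p q) :
    (Omega p q (q * U) ∩ {l | ∀ x ∈ l, q ∣ x}).ncard = W p q U := by
  rw [← image_map_mul_omega hq hpq, Set.ncard_image_of_injective _
    (map_injective_iff.2 (mul_right_injective₀ (by omega))), W]

lemma not_dvd_two_pow {q : ℕ} (hq : 1 < q) (hq2 : Nat.Coprime 2 q) (k : ℕ) : ¬ q ∣ 2 ^ k :=
  fun h => hq.ne' (((hq2.pow_left k).symm).eq_one_of_dvd h)

section Tail

variable {q : ℕ}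

def tailSum (q : ℕ) (l : List ℕ) : ℕ := (l.dropWhile (q ∣ ·)).sum

def withTail (q : ℕ) (l : List ℕ) (n : ℕ) : List ℕ :=
  l.takeWhile (q ∣ ·) ++ binaryParts n

lemma sum_takeWhile_add_tailSum (l : List ℕ) :
    (l.takeWhile (q ∣ ·)).sum + tailSum q l = l.sum := by
  rw [tailSum, ← sum_append, takeWhile_append_dropWhile]

lemma dvd_of_mem_takeWhile {l : List ℕ} {x : ℕ} (hx : x ∈ l.takeWhile (q ∣ ·)) :
    q ∣ x := by
  simpa using mem_takeWhile_imp hx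

lemma dvd_sum_takeWhile (l : List ℕ) : q ∣ (l.takeWhile (q ∣ ·)).sum :=
  dvd_sum fun _ => dvd_of_mem_takeWhile

lemma not_dvd_of_mem_dropWhile {l : List ℕ} (hl : l.Pairwise fun x y => y ∣ x) {x : ℕ}
    (hx : x ∈ l.dropWhile (q ∣ ·)) : ¬ q ∣ x := by
  induction l with
  | nil => simp at hx
  | cons a t ih =>
    rw [dropWhile_cons] at hx
    split_ifs at hx with ha
    · exact ih hl.of_cons hx
    · rw [decide_eq_true_iff] at ha
      rcases mem_cons.1 hx with rfl | hx
      · exact ha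
      · exact fun hqx => ha (hqx.trans (rel_of_pairwise_cons hl hx))

lemma withTail_tailSum {N : ℕ} {l : List ℕ} (hl : l ∈ Omega 2 q N) :
    withTail q l (tailSum q l) = l := by
  obtain ⟨hform, hpw, -⟩ := isSCPartition_iff.1 hl
  have hpow : ∀ x ∈ l.dropWhile (q ∣ ·), ∃ k, x = 2 ^ k := by
    intro x hx
    obtain ⟨a, _ | b, rfl⟩ := hform x ((dropWhile_sublist _).subset hx)
    · exact ⟨a, by simp⟩
    · exact absurd (dvd_mul_of_dvd_right (dvd_pow_self q b.succ_ne_zero) _)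
        (not_dvd_of_mem_dropWhile (hpw.imp And.left) hx)
  rw [withTail, tailSum,
    binaryParts_sum_eq_self hpow ((hpw.sublist (dropWhile_sublist _)).imp And.right),
    takeWhile_append_dropWhile]

lemma tailSum_eq_zero_iff {N : ℕ} {l : List ℕ} (hl : l ∈ Omega 2 q N) :
    tailSum q l = 0 ↔ ∀ x ∈ l, q ∣ x := by
  refine ⟨fun h x hx => ?_, fun h => ?_⟩
  · rw [← withTail_tailSum hl, h, withTail, binaryParts, Nat.bitIndices_zero, map_nil,
      reverse_nil, append_nil] at hx
    exact dvd_of_mem_takeWhile hx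
  · rw [tailSum, dropWhile_eq_nil_iff.2 fun x hx => decide_eq_true (h x hx), sum_nil]

lemma not_dvd_of_mem_binaryParts (hq : ∀ k, ¬ q ∣ 2 ^ k) {n y : ℕ}
    (hy : y ∈ binaryParts n) : ¬ q ∣ y := by
  obtain ⟨i, -, rfl⟩ := mem_binaryParts.1 hy
  exact hq i

lemma takeWhile_withTail (hq : ∀ k, ¬ q ∣ 2 ^ k) (l : List ℕ) (n : ℕ) :
    (withTail q l n).takeWhile (q ∣ ·) = l.takeWhile (q ∣ ·) := by
  have hn : (binaryParts n).takeWhile (q ∣ ·) = [] := takeWhile_eq_nil_iff.2 fun h => by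
    simpa using not_dvd_of_mem_binaryParts hq (getElem_mem h)
  rw [withTail, takeWhile_append_of_pos fun _ => mem_takeWhile_imp, hn, append_nil]

lemma tailSum_withTail (hq : ∀ k, ¬ q ∣ 2 ^ k) (l : List ℕ) (n : ℕ) :
    tailSum q (withTail q l n) = n := by
  have hn : (binaryParts n).dropWhile (q ∣ ·) = binaryParts n :=
    dropWhile_eq_self_iff.2 fun h => by simpa using not_dvd_of_mem_binaryParts hq (getElem_mem h)
  rw [tailSum, withTail, dropWhile_append_of_pos fun _ => mem_takeWhile_imp, hn, sum_binaryParts]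

lemma withTail_withTail (hq : ∀ k, ¬ q ∣ 2 ^ k) (l : List ℕ) (m n : ℕ) :
    withTail q (withTail q l m) n = withTail q l n := by
  rw [withTail, takeWhile_withTail hq, withTail]

lemma withTail_mem_omega {N : ℕ} {l : List ℕ} (hl : l ∈ Omega 2 q N) (hs : tailSum q l ≠ 0)
    {n : ℕ} (hn : Nat.log 2 n ≤ Nat.log 2 (tailSum q l)) :
    withTail q l n ∈ Omega 2 q ((l.takeWhile (q ∣ ·)).sum + n) := by
  have hl' : IsSCPartition 2 q N (withTail q l (tailSum q l)) := (withTail_tailSum hl).symm ▸ hl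
  rw [isSCPartition_iff, withTail, pairwise_append] at hl'
  obtain ⟨hform, ⟨hP, -, hlink⟩, -⟩ := hl'
  refine isSCPartition_iff.2 ⟨fun x hx => ?_, pairwise_append.2 ⟨hP, pairwise_binaryParts n,
    fun x hx => forall_binaryParts_of_log_le hs hn (hlink x hx)⟩, ?_⟩
  · rcases mem_append.1 hx with hx | hx
    · exact hform x (mem_append_left _ hx)
    · obtain ⟨i, -, rfl⟩ := mem_binaryParts.1 hx
      exact ⟨i, 0, by simp⟩
  · rw [withTail, sum_append, sum_binaryParts]

lemma withTail_pred_mem_omega {N : ℕ} {l : List ℕ} (hl : l ∈ Omega 2 q N)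
    (hs : tailSum q l ≠ 0) : withTail q l (tailSum q l - 1) ∈ Omega 2 q (N - 1) := by
  have hsum := hl.2.2 ▸ sum_takeWhile_add_tailSum (q := q) l
  convert withTail_mem_omega hl hs (Nat.log_mono_right (Nat.sub_le _ 1)) using 2
  omega

lemma withTail_succ_mem_omega {N : ℕ} (hq : ∀ k, ¬ q ∣ 2 ^ k) (hN : q ∣ N) (hN0 : N ≠ 0)
    {l : List ℕ} (hl : l ∈ Omega 2 q (N - 1)) :
    withTail q l (tailSum q l + 1) ∈ Omega 2 q N := by
  set s := tailSum q l
  have hsum := hl.2.2 ▸ sum_takeWhile_add_tailSum (q := q) l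
  have hs1 : q ∣ s + 1 :=
    (Nat.dvd_add_right (dvd_sum_takeWhile l)).1 (by convert hN using 1; omega)
  have hs : s ≠ 0 := fun h => hq 0 (by simpa [h] using hs1)
  have hlog : Nat.log 2 (s + 1) = Nat.log 2 s :=
    ((Nat.log_eq_log_succ_iff one_lt_two hs).2 fun h => hq _ (h ▸ hs1)).symm
  convert withTail_mem_omega hl hs hlog.le using 2
  omega

lemma bijOn_withTail_pred {N : ℕ} (hq : ∀ k, ¬ q ∣ 2 ^ k) (hN : q ∣ N) (hN0 : N ≠ 0) :
    Set.BijOn (fun l => withTail q l (tailSum q l - 1))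
      (Omega 2 q N \ {l | ∀ x ∈ l, q ∣ x}) (Omega 2 q (N - 1)) := by
  refine Set.InvOn.bijOn (f' := fun l => withTail q l (tailSum q l + 1)) ⟨?_, ?_⟩ ?_ ?_
  · rintro l ⟨hl, hdvd⟩
    have hs : tailSum q l ≠ 0 := mt (tailSum_eq_zero_iff hl).1 hdvd
    simp only [tailSum_withTail hq, withTail_withTail hq,
      Nat.sub_add_cancel (Nat.one_le_iff_ne_zero.2 hs), withTail_tailSum hl]
  · intro l hl
    simp only [tailSum_withTail hq, withTail_withTail hq, Nat.add_sub_cancel,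
      withTail_tailSum hl]
  · rintro l ⟨hl, hdvd⟩
    exact withTail_pred_mem_omega hl (mt (tailSum_eq_zero_iff hl).1 hdvd)
  · intro l hl
    have hmem := withTail_succ_mem_omega hq hN hN0 hl
    refine ⟨hmem, fun hdvd => ?_⟩
    simpa [tailSum_withTail hq] using (tailSum_eq_zero_iff hmem).2 hdvd

end Tail

theorem W_qU_p_eq_two (q : ℕ) (hq : 1 < q) (hq2 : Nat.Coprime 2 q)
    (U : ℕ) (hU : 1 ≤ U) :
    W 2 q (q * U) = W 2 q U + W 2 q (q * U - 1) := by
  have hN0 : q * U ≠ 0 := Nat.mul_ne_zero (by omega) (by omega)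
  rw [W, ← Set.ncard_inter_add_ncard_sdiff_eq_ncard _ {l | ∀ x ∈ l, q ∣ x}
    (finite_omega 2 q _), ncard_omega_inter_forall_dvd hq hq2,
    (bijOn_withTail_pred (not_dvd_two_pow hq hq2) (dvd_mul_right q U) hN0).ncard_eq]
  rfl
end

section
/- If there exists a nonnegative integer U₀ with W(U₀) ≥ 2, then the sequence W is unbounded: for every n there exists a nonnegative integer U with W(U) ≥ n. Equivalently, W is either {0,1}-valued or unbounded. -/
/-! If `m` is a partition of `U₀` and `l` a partition of `U`, then scaling `m` by `s = (pq)^U` and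
appending `l` gives a partition of `s * U₀ + U`: every part of `l` is at most `U < s` and divides `s`.
The glued partition determines `m` and `l` (the parts of `l` are exactly its parts below `s`), so
`W(s * U₀ + U) ≥ W(U₀) * W(U)`. Starting from `W(U₀) ≥ 2` and iterating gives values `≥ 2^k`. -/

section Omega

variable {p q U : ℕ} {l : List ℕ} {x : ℕ}

lemma pos_of_mem_Omega (hp : 0 < p) (hq : 0 < q) (hl : l ∈ Omega p q U) (hx : x ∈ l) : 0 < x := by
  obtain ⟨a, b, rfl⟩ := hl.1 x hx
  positivity

lemma le_of_mem_Omega (hl : l ∈ Omega p q U) (hx : x ∈ l) : x ≤ U :=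
  hl.2.2 ▸ List.le_sum_of_mem hx

lemma dvd_pow_of_mem_Omega (hp : 1 < p) (hq : 1 < q) (hl : l ∈ Omega p q U) (hx : x ∈ l) :
    x ∣ (p * q) ^ U := by
  obtain ⟨a, b, rfl⟩ := hl.1 x hx
  have hle := le_of_mem_Omega hl hx
  have ha : a ≤ U := calc
    a ≤ p ^ a := (Nat.lt_pow_self hp).le
    _ ≤ p ^ a * q ^ b := Nat.le_mul_of_pos_right _ (by positivity)
    _ ≤ U := hle
  have hb : b ≤ U := calc
    b ≤ q ^ b := (Nat.lt_pow_self hq).le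
    _ ≤ p ^ a * q ^ b := Nat.le_mul_of_pos_left _ (by positivity)
    _ ≤ U := hle
  rw [mul_pow]
  exact mul_dvd_mul (pow_dvd_pow p ha) (pow_dvd_pow q hb)

lemma pairwise_gt_of_mem_Omega (hl : l ∈ Omega p q U) : l.Pairwise (· > ·) :=
  List.isChain_iff_pairwise.mp (hl.2.1.imp fun _ _ h => h.2)

lemma Omega_finite (p q U : ℕ) : (Omega p q U).Finite := by
  refine (List.finite_toSet (List.range (U + 1)).reverse.sublists).subset fun l hl => ?_
  have hrange : (List.range (U + 1)).reverse.Pairwise (· > ·) :=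
    List.pairwise_reverse.mpr List.pairwise_lt_range
  have hsub : l ⊆ (List.range (U + 1)).reverse := fun x hx => by
    simpa [Nat.lt_succ_iff] using le_of_mem_Omega hl hx
  have hgt := pairwise_gt_of_mem_Omega hl
  exact List.mem_sublists.mpr
    (List.sublist_of_subperm_of_pairwise (hgt.nodup.subperm hsub) hgt hrange)

end Omega

section Gluing

variable {s : ℕ} {m m' l l' : List ℕ}

lemma filter_lt_map_mul_append (hm : ∀ x ∈ m, 0 < x) (hl : ∀ x ∈ l, x < s) :
    (m.map (s * ·) ++ l).filter (· < s) = l := by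
  rw [List.filter_append, List.filter_eq_nil_iff.mpr, List.filter_eq_self.mpr (by simpa using hl), List.nil_append]
  simp only [List.mem_map, forall_exists_index, and_imp, forall_apply_eq_imp_iff₂,
    decide_eq_true_eq, not_lt]
  exact fun x hx => Nat.le_mul_of_pos_right s (hm x hx)

lemma map_mul_append_inj (hs : 0 < s) (hm : ∀ x ∈ m, 0 < x) (hm' : ∀ x ∈ m', 0 < x)
    (hl : ∀ x ∈ l, x < s) (hl' : ∀ x ∈ l', x < s)
    (h : m.map (s * ·) ++ l = m'.map (s * ·) ++ l') : m = m' ∧ l = l' := by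
  have hll : l = l' := by
    simpa only [filter_lt_map_mul_append hm hl, filter_lt_map_mul_append hm' hl'] using
      congrArg (List.filter (· < s)) h
  subst hll
  exact ⟨List.map_injective_iff.mpr (fun _ _ => Nat.eq_of_mul_eq_mul_left hs)
    (List.append_cancel_right h), rfl⟩

end Gluing

section Supermultiplicativity

variable {p q U₀ U : ℕ} {m l : List ℕ}

lemma map_mul_append_mem_Omega (hp : 1 < p) (hq : 1 < q)
    (hm : m ∈ Omega p q U₀) (hl : l ∈ Omega p q U) :
    m.map ((p * q) ^ U * ·) ++ l ∈ Omega p q ((p * q) ^ U * U₀ + U) := by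
  set s := (p * q) ^ U
  have hs : 0 < s := by positivity
  have hUs : U < s := Nat.lt_pow_self (by nlinarith)
  refine ⟨?_, ?_, ?_⟩
  · simp only [List.mem_append, List.mem_map]
    rintro x (⟨y, hy, rfl⟩ | hx)
    · obtain ⟨a, b, rfl⟩ := hm.1 y hy
      exact ⟨a + U, b + U, by ring⟩
    · exact hl.1 x hx
  · refine List.IsChain.append ?_ hl.2.1 fun x hx y hy => ?_
    · exact List.isChain_map_of_isChain _ (fun a b hab =>
        ⟨mul_dvd_mul_left s hab.1, Nat.mul_lt_mul_of_pos_left hab.2 hs⟩) hm.2.1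
    · obtain ⟨z, hz, rfl⟩ := List.mem_map.mp (List.mem_of_getLast? hx)
      have hyl : y ∈ l := List.mem_of_mem_head? hy
      refine ⟨(dvd_pow_of_mem_Omega hp hq hl hyl).mul_right z, ?_⟩
      calc y ≤ U := le_of_mem_Omega hl hyl
        _ < s := hUs
        _ ≤ s * z := Nat.le_mul_of_pos_right s (pos_of_mem_Omega (by omega) (by omega) hm hz)
  · rw [List.sum_append, hl.2.2, List.sum_map_mul_left, List.map_id', hm.2.2]

lemma W_mul_le (hp : 1 < p) (hq : 1 < q) :
    W p q U₀ * W p q U ≤ W p q ((p * q) ^ U * U₀ + U) := by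
  set s := (p * q) ^ U
  have hs : 0 < s := by positivity
  have hUs : U < s := Nat.lt_pow_self (by nlinarith)
  have hpos : ∀ {V l}, l ∈ Omega p q V → ∀ x ∈ l, 0 < x :=
    fun hl _ => pos_of_mem_Omega (by omega) (by omega) hl
  have hsmall : ∀ {l}, l ∈ Omega p q U → ∀ x ∈ l, x < s :=
    fun hl _ hx => (le_of_mem_Omega hl hx).trans_lt hUs
  rw [W, W, W, ← Set.ncard_prod]
  refine Set.ncard_le_ncard_of_injOn (fun ml => ml.1.map (s * ·) ++ ml.2)
    (fun ml hml => map_mul_append_mem_Omega hp hq hml.1 hml.2) ?_ (Omega_finite _ _ _)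
  rintro ⟨m, l⟩ ⟨hm, hl⟩ ⟨m', l'⟩ ⟨hm', hl'⟩ h
  obtain ⟨rfl, rfl⟩ := map_mul_append_inj hs (hpos hm) (hpos hm') (hsmall hl) (hsmall hl') h
  rfl

lemma exists_two_pow_le_W (hp : 1 < p) (hq : 1 < q) (h : 2 ≤ W p q U₀) (k : ℕ) :
    ∃ U, 2 ^ k ≤ W p q U := by
  induction k with
  | zero => exact ⟨U₀, by omega⟩
  | succ k ih =>
    obtain ⟨U, hU⟩ := ih
    refine ⟨(p * q) ^ U * U₀ + U, ?_⟩
    calc 2 ^ (k + 1) = 2 * 2 ^ k := by ring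
      _ ≤ W p q U₀ * W p q U := Nat.mul_le_mul h hU
      _ ≤ _ := W_mul_le hp hq

end Supermultiplicativity

theorem W_unbounded_of_two_le_general (p q : ℕ) (hp : 1 < p) (hq : 1 < q)
    (h : ∃ U₀ : ℕ, 2 ≤ W p q U₀) :
    ∀ n : ℕ, ∃ U : ℕ, n ≤ W p q U := by
  obtain ⟨U₀, hU₀⟩ := h
  intro n
  obtain ⟨U, hU⟩ := exists_two_pow_le_W hp hq hU₀ n
  exact ⟨U, n.lt_two_pow_self.le.trans hU⟩

theorem W_unbounded_of_two_le (p q : ℕ) (hp : 1 < p) (hq : 1 < q)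
    (hpq : Nat.Coprime p q) (h : ∃ U₀ : ℕ, 2 ≤ W p q U₀) :
    ∀ n : ℕ, ∃ U : ℕ, n ≤ W p q U :=
  W_unbounded_of_two_le_general p q hp hq h
end
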